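/- Under scheduling governed by anti-monotonic validity predicates V_f (depending on the function f being scheduled), two distinct functions f and g can co-occur in some state reachable from the empty state if and only if one of the following holds: V_f(0) and V_g({f}), or V_g(0) and V_f({g}). -/

import Mathlib

def AntiMono {F : Type*} (P : Multiset F → Prop) : Prop :=
  ∀ σ' σ : Multiset F, σ' ≤ σ → P σ → P σ'

/-- One step: add function `h` when `V h` holds of the current state, or remove one occurrence. -/
def Step {F : Type*} [DecidableEq F] (V : F → Multiset F → Prop) (σ τ : Multiset F) : Prop :=
  (∃ h : F, V h σ ∧ τ = h ::ₘ σ) ∨ (∃ h ∈ σ, τ = σ.erase h)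

def Reach {F : Type*} [DecidableEq F] (V : F → Multiset F → Prop) (σ : Multiset F) : Prop :=
  Relation.ReflTransGen (Step V) 0 σ

/-!
Necessity is an invariant of reachable states: every member `h` satisfies `V h 0`, and every
two members `f, g` (occurrences of the same function allowed) satisfy the disjunction of the
theorem. Adding `h` to `σ` requires `V h σ`, which by anti-monotonicity gives `V h 0` and
`V h {x}` for every `x ∈ σ`; removals keep the invariant because it is inherited by
submultisets. Sufficiency is the two-step schedule `0 → {f} → {f, g}` (or with `f, g` swapped).
-/

section

variable {F : Type*} [DecidableEq F] {V : F → Multiset F → Prop}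

def PairAddable (V : F → Multiset F → Prop) (f g : F) : Prop :=
  (V f 0 ∧ V g {f}) ∨ (V g 0 ∧ V f {g})

def Consistent (V : F → Multiset F → Prop) (σ : Multiset F) : Prop :=
  (∀ h ∈ σ, V h 0) ∧ ∀ f ∈ σ, ∀ g ∈ σ.erase f, PairAddable V f g

namespace Consistent

theorem zero : Consistent V 0 := by
  simp [Consistent]

theorem of_le {σ τ : Multiset F} (hτσ : τ ≤ σ) (hσ : Consistent V σ) : Consistent V τ :=
  ⟨fun h hh => hσ.1 h (Multiset.mem_of_le hτσ hh),
    fun f hf g hg => hσ.2 f (Multiset.mem_of_le hτσ hf) g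
      (Multiset.mem_of_le (Multiset.erase_le_erase f hτσ) hg)⟩

theorem cons (hV : ∀ h, AntiMono (V h)) {σ : Multiset F} {h : F} (hσ : Consistent V σ)
    (hh : V h σ) : Consistent V (h ::ₘ σ) := by
  have hh_zero : V h 0 := hV h 0 σ (Multiset.zero_le σ) hh
  have hh_single {x : F} (hx : x ∈ σ) : V h {x} :=
    hV h {x} σ (Multiset.singleton_le.mpr hx) hh
  refine ⟨fun x hx => ?_, fun f hf g hg => ?_⟩
  · rcases Multiset.mem_cons.mp hx with rfl | hx
    exacts [hh_zero, hσ.1 x hx]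
  by_cases hfh : f = h
  · subst hfh
    rw [Multiset.erase_cons_head] at hg
    exact Or.inr ⟨hσ.1 g hg, hh_single hg⟩
  have hfσ : f ∈ σ := (Multiset.mem_cons.mp hf).resolve_left hfh
  rw [Multiset.erase_cons_tail σ (Ne.symm hfh)] at hg
  rcases Multiset.mem_cons.mp hg with rfl | hg
  exacts [Or.inl ⟨hσ.1 f hfσ, hh_single hfσ⟩, hσ.2 f hfσ g hg]

theorem of_step (hV : ∀ h, AntiMono (V h)) {σ τ : Multiset F} (hστ : Step V σ τ)
    (hσ : Consistent V σ) : Consistent V τ := by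
  rcases hστ with ⟨h, hh, rfl⟩ | ⟨h, -, rfl⟩
  exacts [hσ.cons hV hh, hσ.of_le (Multiset.erase_le h σ)]

end Consistent

theorem Reach.consistent (hV : ∀ h, AntiMono (V h)) {σ : Multiset F} (hσ : Reach V σ) :
    Consistent V σ := by
  induction hσ with
  | refl => exact Consistent.zero
  | tail _ hstep ih => exact ih.of_step hV hstep

theorem Reach.pair {f g : F} (hf : V f 0) (hg : V g {f}) : Reach V (g ::ₘ {f}) :=
  have hstep_f : Step V 0 {f} := Or.inl ⟨f, hf, rfl⟩
  have hstep_g : Step V {f} (g ::ₘ {f}) := Or.inl ⟨g, hg, rfl⟩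
  Relation.ReflTransGen.tail (Relation.ReflTransGen.single hstep_f) hstep_g

end

theorem coOccurrence_characterization {F : Type*} [DecidableEq F]
    (V : F → Multiset F → Prop) (hV : ∀ h, AntiMono (V h)) (f g : F) (hfg : f ≠ g) :
    (∃ σ : Multiset F, Reach V σ ∧ f ∈ σ ∧ g ∈ σ) ↔
      (V f 0 ∧ V g {f}) ∨ (V g 0 ∧ V f {g}) := by
  constructor
  · rintro ⟨σ, hσ, hf, hg⟩
    exact (hσ.consistent hV).2 f hf g ((Multiset.mem_erase_of_ne hfg.symm).mpr hg)
  · rintro (⟨hf, hg⟩ | ⟨hg, hf⟩)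
    · exact ⟨_, Reach.pair hf hg, by simp, by simp⟩
    · exact ⟨_, Reach.pair hg hf, by simp, by simp⟩
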